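/- Fix a prime p. Let K̃ ⊇ K be an extension of p-adic differential fields (the derivation of K̃ extending that of K) such that the field of constants of K̃ equals the field of constants k of K, and let A ∈ Mat_n(K). If the equation y′ = Ay has a p-adic Picard–Vessiot field over K̃, then y′ = Ay has a p-adic Picard–Vessiot field over K. -/

import Mathlib

/-- A derivation on a field `F`. -/
structure FieldDeriv (F : Type) [Field F] : Type where
  d : F → F
  map_add : ∀ a b : F, d (a + b) = d a + d b
  leibniz : ∀ a b : F, d (a * b) = a * d b + d a * b

/-- A valuation subring `O` of `F` witnesses that `F` is a p-adic field if `pO` is the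
maximal ideal of `O` and `O/pO ≅ 𝔽_p`. -/
def PAdicWitness (p : ℕ) {F : Type} [Field F] (O : ValuationSubring F) : Prop :=
  (Ideal.span {(p : O)}).IsMaximal ∧
    Nonempty ((O ⧸ (Ideal.span {(p : O)} : Ideal O)) ≃+* ZMod p)

/-- A field is p-adic if it admits a valuation subring witnessing this. -/
def IsPAdicField (p : ℕ) (F : Type) [Field F] : Prop :=
  ∃ O : ValuationSubring F, PAdicWitness p O

/-- `L/K`, with derivations `dL` extending `dK`, is a Picard--Vessiot field for `y' = A y`. -/
def IsPicardVessiot {K L : Type} [Field K] [Field L] [Algebra K L]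
    (dK : FieldDeriv K) (dL : FieldDeriv L) {n : ℕ}
    (A : Matrix (Fin n) (Fin n) K) : Prop :=
  (∀ a : K, dL.d (algebraMap K L a) = algebraMap K L (dK.d a)) ∧
  ∃ F : Matrix (Fin n) (Fin n) L, IsUnit F.det ∧
    (∀ i j, dL.d (F i j) = (A.map (algebraMap K L) * F) i j) ∧
    IntermediateField.adjoin K (Set.range fun q : Fin n × Fin n => F q.1 q.2) = ⊤ ∧
    ∀ x : L, dL.d x = 0 → ∃ a : K, dK.d a = 0 ∧ algebraMap K L a = x

/-!
The entries of a fundamental matrix `F` in the Picard–Vessiot field `L` over `K̃` generate over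
`K` a subfield `E = K(F)` that is stable under the derivation, because `F' = AF` with `A` over
`K`. The constants of `E` lie among those of `L`, i.e. of `K̃`, i.e. of `K`, so `E` is a
Picard–Vessiot field over `K`. Finally, any subfield `E` of a `p`-adic field is `p`-adic: if
`O` witnesses this for `L`, then `O ∩ E` does for `E`, since `(O ∩ E)/p(O ∩ E)` injects into
`O/pO ≅ 𝔽_p` (if `x = p y` with `y ∈ O`, then `y = x / p ∈ E`) and is onto, `𝔽_p` being
generated by `1`.
-/

namespace FieldDeriv

variable {F : Type} [Field F] (D : FieldDeriv F)

theorem map_zero : D.d 0 = 0 := by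
  simpa using D.map_add 0 0

theorem map_one : D.d 1 = 0 := by
  simpa using D.leibniz 1 1

theorem map_inv (x : F) : D.d x⁻¹ = -(x⁻¹ ^ 2 * D.d x) := by
  rcases eq_or_ne x 0 with rfl | hx
  · simp [D.map_zero]
  · have h := D.leibniz x x⁻¹
    rw [mul_inv_cancel₀ hx, map_one] at h
    linear_combination -x⁻¹ * h - D.d x⁻¹ * inv_mul_cancel₀ hx

variable {K L : Type} [Field K] [Field L] [Algebra K L]

def restrict (D : FieldDeriv L) (E : IntermediateField K L) (hE : ∀ x ∈ E, D.d x ∈ E) :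
    FieldDeriv E where
  d x := ⟨D.d x, hE x x.2⟩
  map_add a b := Subtype.ext (D.map_add a b)
  leibniz a b := Subtype.ext (D.leibniz a b)

theorem map_mem_adjoin {dK : FieldDeriv K} {D : FieldDeriv L}
    (hD : ∀ a : K, D.d (algebraMap K L a) = algebraMap K L (dK.d a))
    {S : Set L} (hS : ∀ s ∈ S, D.d s ∈ IntermediateField.adjoin K S)
    {x : L} (hx : x ∈ IntermediateField.adjoin K S) : D.d x ∈ IntermediateField.adjoin K S := by
  induction hx using IntermediateField.adjoin_induction with
  | mem s hs => exact hS s hs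
  | algebraMap a => exact hD a ▸ IntermediateField.algebraMap_mem _ _
  | add x y _ _ hx hy => exact D.map_add x y ▸ add_mem hx hy
  | mul x y hx' hy' hx hy =>
    exact D.leibniz x y ▸ add_mem (mul_mem hx' hy) (mul_mem hx hy')
  | inv x hx' hx =>
    exact D.map_inv x ▸ neg_mem (mul_mem (pow_mem (inv_mem hx') 2) hx)

end FieldDeriv

section PicardVessiot

variable {K L : Type} [Field K] [Field L] [Algebra K L] {n : ℕ}

theorem isPicardVessiot_adjoin_entries (dK : FieldDeriv K) (dL : FieldDeriv L)
    (hdL : ∀ a : K, dL.d (algebraMap K L a) = algebraMap K L (dK.d a))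
    (hconst : ∀ x : L, dL.d x = 0 → ∃ a : K, dK.d a = 0 ∧ algebraMap K L a = x)
    (A : Matrix (Fin n) (Fin n) K) (F : Matrix (Fin n) (Fin n) L) (hdet : IsUnit F.det)
    (hF : ∀ i j, dL.d (F i j) = (A.map (algebraMap K L) * F) i j) :
    ∃ dE : FieldDeriv (IntermediateField.adjoin K
        (Set.range fun q : Fin n × Fin n => F q.1 q.2)),
      IsPicardVessiot dK dE A := by
  set E := IntermediateField.adjoin K (Set.range fun q : Fin n × Fin n => F q.1 q.2)
  have hFE : ∀ i j, F i j ∈ E := fun i j => IntermediateField.subset_adjoin _ _ ⟨(i, j), rfl⟩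
  let FE : Matrix (Fin n) (Fin n) E := fun i j => ⟨F i j, hFE i j⟩
  have hFE_map : FE.map (algebraMap E L) = F := rfl
  have hAFE_map : (A.map (algebraMap K E) * FE).map (algebraMap E L) =
      A.map (algebraMap K L) * F := by
    rw [Matrix.map_mul, Matrix.map_map, hFE_map]
    rfl
  have hstable : ∀ x ∈ E, dL.d x ∈ E := fun x => FieldDeriv.map_mem_adjoin hdL (by
    rintro _ ⟨⟨i, j⟩, rfl⟩
    rw [hF, ← hAFE_map]
    exact ((A.map (algebraMap K E) * FE) i j).2)
  refine ⟨dL.restrict E hstable, fun a => Subtype.ext (hdL a), FE, ?_, ?_, ?_, ?_⟩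
  · refine (isUnit_map_iff (algebraMap E L) _).mp ?_
    rwa [RingHom.map_det, RingHom.mapMatrix_apply, hFE_map]
  · intro i j
    exact Subtype.ext ((hF i j).trans (congrFun (congrFun hAFE_map i) j).symm)
  · apply IntermediateField.lift_injective
    rw [IntermediateField.lift_adjoin, IntermediateField.lift_top, ← Set.range_comp]
    rfl
  · rintro ⟨x, hx⟩ hx0
    obtain ⟨a, ha0, rfl⟩ := hconst x (congrArg Subtype.val hx0)
    exact ⟨a, ha0, rfl⟩

end PicardVessiot

section PAdic

variable {K L : Type} [Field K] [Field L]

theorem ValuationSubring.ker_comap_quotient_span_natCast (O : ValuationSubring L)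
    (f : K →+* L) (p : ℕ) :
    RingHom.ker ((Ideal.Quotient.mk (Ideal.span {(p : O)})).comp
      (f.restrict (O.comap f) O fun _ hx => hx)) = Ideal.span {(p : O.comap f)} := by
  apply le_antisymm
  · intro x hx
    obtain ⟨y, hy⟩ := Ideal.mem_span_singleton'.mp (Ideal.Quotient.eq_zero_iff_mem.mp hx)
    have hfx : f x = y * p := (congrArg Subtype.val hy).symm
    rcases eq_or_ne (p : K) 0 with hp | hp
    · have hx0 : x = 0 := Subtype.ext (f.injective (by rw [hfx, ← map_natCast f, hp]; simp))
      rw [hx0]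
      exact Ideal.zero_mem _
    · have hdiv : (x : K) / p ∈ O.comap f := by
        rw [ValuationSubring.mem_comap, map_div₀, hfx, map_natCast,
          mul_div_cancel_right₀ _ (by rwa [← map_natCast f, map_ne_zero])]
        exact y.2
      refine Ideal.mem_span_singleton'.mpr ⟨⟨(x : K) / p, hdiv⟩, Subtype.ext ?_⟩
      exact div_mul_cancel₀ _ hp
  · rw [Ideal.span_le, Set.singleton_subset_iff, SetLike.mem_coe, RingHom.mem_ker, map_natCast]
    exact Ideal.Quotient.eq_zero_iff_mem.mpr (Ideal.mem_span_singleton_self _)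

theorem PAdicWitness.comap {p : ℕ} {O : ValuationSubring L} (hO : PAdicWitness p O)
    (f : K →+* L) : PAdicWitness p (O.comap f) := by
  obtain ⟨hmax, ⟨e⟩⟩ := hO
  set ψ := (Ideal.Quotient.mk (Ideal.span {(p : O)})).comp
    (f.restrict (O.comap f) O fun _ hx => hx)
  have hψ : Function.Surjective ψ := by
    intro z
    obtain ⟨m, hm⟩ := ZMod.intCast_surjective (e z)
    exact ⟨m, by rw [map_intCast, ← e.injective.eq_iff, map_intCast, hm]⟩
  let equiv := (Ideal.quotEquivOfEq (O.ker_comap_quotient_span_natCast f p).symm).trans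
    (RingHom.quotientKerEquivOfSurjective hψ)
  exact ⟨Ideal.Quotient.maximal_of_isField _ (equiv.toMulEquiv.isField
    (Ideal.Quotient.maximal_ideal_iff_isField_quotient _ |>.mp hmax)), ⟨equiv.trans e⟩⟩

theorem IsPAdicField.of_ringHom {p : ℕ} (f : K →+* L) (h : IsPAdicField p L) :
    IsPAdicField p K :=
  let ⟨O, hO⟩ := h
  ⟨O.comap f, hO.comap f⟩

end PAdic

theorem padic_picard_vessiot_descends_general
    (p : ℕ)
    (K Kt : Type) [Field K] [Field Kt] [Algebra K Kt]
    (dK : FieldDeriv K) (dKt : FieldDeriv Kt)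
    (hext : ∀ a : K, dKt.d (algebraMap K Kt a) = algebraMap K Kt (dK.d a))
    -- the field of constants of `K̃` equals the field of constants `k` of `K`
    (hconst : ∀ x : Kt, dKt.d x = 0 → ∃ a : K, dK.d a = 0 ∧ algebraMap K Kt a = x)
    (n : ℕ) (A : Matrix (Fin n) (Fin n) K)
    (hex : ∃ (L : Type) (_ : Field L) (_ : Algebra Kt L) (dL : FieldDeriv L),
      IsPicardVessiot dKt dL (A.map (algebraMap K Kt)) ∧ IsPAdicField p L) :
    ∃ (L : Type) (_ : Field L) (_ : Algebra K L) (dL : FieldDeriv L),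
      IsPicardVessiot dK dL A ∧ IsPAdicField p L := by
  obtain ⟨L, _, _, dL, ⟨hdL, F, hdet, hF, -, hLconst⟩, hLpadic⟩ := hex
  let _ : Algebra K L := ((algebraMap Kt L).comp (algebraMap K Kt)).toAlgebra
  have hdL_K : ∀ a : K, dL.d (algebraMap K L a) = algebraMap K L (dK.d a) := fun a => by
    rw [RingHom.algebraMap_toAlgebra, RingHom.comp_apply, hdL, hext]
    rfl
  have hLconst_K : ∀ x : L, dL.d x = 0 → ∃ a : K, dK.d a = 0 ∧ algebraMap K L a = x := by
    intro x hx
    obtain ⟨b, hb, rfl⟩ := hLconst x hx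
    obtain ⟨a, ha, rfl⟩ := hconst b hb
    exact ⟨a, ha, rfl⟩
  -- `hF` is stated for `(A.map _).map _`, definitionally `A.map (algebraMap K L)`
  obtain ⟨dE, hE⟩ := isPicardVessiot_adjoin_entries dK dL hdL_K hLconst_K A F hdet hF
  exact ⟨_, inferInstance, inferInstance, dE, hE, hLpadic.of_ringHom (algebraMap _ L)⟩

/-- Let `K̃ ⊇ K` be an extension of p-adic differential fields with the
same field of constants.  If `y' = A y` (with `A` over `K`) has a p-adic Picard--Vessiot
field over `K̃`, then it has a p-adic Picard--Vessiot field over `K`. -/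
theorem padic_picard_vessiot_descends
    (p : ℕ) (hp : p.Prime)
    (K Kt : Type) [Field K] [Field Kt] [CharZero K] [CharZero Kt] [Algebra K Kt]
    (dK : FieldDeriv K) (dKt : FieldDeriv Kt)
    (hext : ∀ a : K, dKt.d (algebraMap K Kt a) = algebraMap K Kt (dK.d a))
    (hKpadic : IsPAdicField p K) (hKtpadic : IsPAdicField p Kt)
    -- the field of constants of `K̃` equals the field of constants `k` of `K`
    (hconst : ∀ x : Kt, dKt.d x = 0 → ∃ a : K, dK.d a = 0 ∧ algebraMap K Kt a = x)
    (n : ℕ) (A : Matrix (Fin n) (Fin n) K)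
    (hex : ∃ (L : Type) (_ : Field L) (_ : Algebra Kt L) (dL : FieldDeriv L),
      IsPicardVessiot dKt dL (A.map (algebraMap K Kt)) ∧ IsPAdicField p L) :
    ∃ (L : Type) (_ : Field L) (_ : Algebra K L) (dL : FieldDeriv L),
      IsPicardVessiot dK dL A ∧ IsPAdicField p L :=
  padic_picard_vessiot_descends_general p K Kt dK dKt hext hconst n A hex
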